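/- Let g, h : {1,2,...} → ℤ be functions with g(1) = h(1) = 1 and g(n) ≥ 1, h(n) ≥ 1 for all n. Then for all 1 ≤ m ≤ n, the rational number (∏_{k=1}^n h(k)) · A_{n,m}^{g,h} is a positive integer. -/

import Mathlib

/-!
Comparing coefficients of `x^{j+1}` in the recurrence gives
`h(n+1) A_{n+1,j+1} = ∑_{k=1}^{n+1} g(k) A_{n+1-k,j}`. Multiplying by `∏_{i ≤ n} h(i)` and
splitting this product as `∏_{i ≤ n+1-k} h(i) · ∏_{n+1-k < i ≤ n} h(i)` shows by strong
induction that `∏_{i ≤ n} h(i) · A_{n,m}` is an integer. Positivity of all terms makes every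
`A_{n,m}` nonnegative, and `A_{n+1,j+1}` is positive because the term `k = n+1` (if `j = 0`)
or `k = 1` (if `1 ≤ j ≤ n`) is.
-/

/-- The polynomials `P_n^{g,h}` defined by `P_0 = 1` and
`P_n(x) = (x / h(n)) * ∑_{k=1}^n g(k) P_{n-k}(x)` for `n ≥ 1`. -/
noncomputable def HVP (g h : ℕ → ℚ) : ℕ → Polynomial ℚ
  | 0 => 1
  | (n + 1) =>
      Polynomial.C (h (n + 1))⁻¹ * Polynomial.X *
        ∑ k ∈ (Finset.Icc 1 (n + 1)).attach, Polynomial.C (g k.1) * HVP g h (n + 1 - k.1)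
  decreasing_by
    have := (Finset.mem_Icc.mp k.2).1
    omega

open Polynomial Finset

section Recurrence

variable (g h : ℕ → ℚ)

@[simp]
lemma HVP_zero : HVP g h 0 = 1 := by
  rw [HVP]

lemma HVP_succ (n : ℕ) :
    HVP g h (n + 1) =
      C (h (n + 1))⁻¹ * X * ∑ k ∈ Icc 1 (n + 1), C (g k) * HVP g h (n + 1 - k) := by
  rw [HVP, sum_attach (Icc 1 (n + 1)) fun k => C (g k) * HVP g h (n + 1 - k)]

@[simp]
lemma coeff_HVP_succ_zero (n : ℕ) : (HVP g h (n + 1)).coeff 0 = 0 := by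
  simp [HVP_succ, mul_assoc]

lemma coeff_HVP_succ_succ (n j : ℕ) :
    (HVP g h (n + 1)).coeff (j + 1) =
      (h (n + 1))⁻¹ * ∑ k ∈ Icc 1 (n + 1), g k * (HVP g h (n + 1 - k)).coeff j := by
  simp only [HVP_succ, mul_assoc, coeff_C_mul, coeff_X_mul, finsetSum_coeff]

end Recurrence

section Positivity

variable {g h : ℕ → ℚ}

lemma coeff_HVP_nonneg (hg : ∀ k, 1 ≤ k → 0 ≤ g k) (hh : ∀ k, 1 ≤ k → 0 ≤ h k) (n m : ℕ) :
    0 ≤ (HVP g h n).coeff m := by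
  induction n using Nat.strong_induction_on generalizing m with
  | _ n ih =>
    rcases n with _ | n
    · rw [HVP_zero, coeff_one]
      split_ifs <;> norm_num
    rcases m with _ | j
    · simp
    rw [coeff_HVP_succ_succ]
    exact mul_nonneg (inv_nonneg.2 (hh _ (by omega))) <| sum_nonneg fun k hk =>
      mul_nonneg (hg k (mem_Icc.1 hk).1) (ih _ (by grind) _)

lemma coeff_HVP_pos (hg : ∀ k, 1 ≤ k → 0 < g k) (hh : ∀ k, 1 ≤ k → 0 < h k) {n m : ℕ}
    (hm : 1 ≤ m) (hmn : m ≤ n) : 0 < (HVP g h n).coeff m := by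
  induction n generalizing m with
  | zero => omega
  | succ n ih =>
    obtain ⟨j, rfl⟩ : ∃ j, m = j + 1 := ⟨m - 1, by omega⟩
    have hterm_nonneg : ∀ k ∈ Icc 1 (n + 1), 0 ≤ g k * (HVP g h (n + 1 - k)).coeff j :=
      fun k hk => mul_nonneg (hg k (mem_Icc.1 hk).1).le
        (coeff_HVP_nonneg (fun k hk => (hg k hk).le) (fun k hk => (hh k hk).le) _ _)
    have hterm_pos : ∃ k ∈ Icc 1 (n + 1), 0 < g k * (HVP g h (n + 1 - k)).coeff j := by
      rcases Nat.eq_zero_or_pos j with rfl | hj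
      · exact ⟨n + 1, by simp, by simpa using hg (n + 1) (by omega)⟩
      · exact ⟨1, by simp, by simpa using mul_pos (hg 1 le_rfl) (ih hj (by omega))⟩
    rw [coeff_HVP_succ_succ]
    exact mul_pos (inv_pos.2 (hh _ (by omega))) (sum_pos' hterm_nonneg hterm_pos)

end Positivity

lemma prod_Icc_one_mul_prod_Ioc {M : Type*} [CommMonoid M] (f : ℕ → M) {r n : ℕ} (hrn : r ≤ n) :
    (∏ i ∈ Icc 1 r, f i) * ∏ i ∈ Ioc r n, f i = ∏ i ∈ Icc 1 n, f i := by
  rw [← zero_add 1, Icc_add_one_left_eq_Ioc, Icc_add_one_left_eq_Ioc]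
  exact prod_Ioc_consecutive f (Nat.zero_le r) hrn

lemma prod_mul_coeff_HVP_mem {g h : ℕ → ℚ} (R : Subring ℚ) (hg : ∀ k, g k ∈ R) (hh : ∀ k, h k ∈ R)
    (hh₀ : ∀ k, 1 ≤ k → h k ≠ 0) (n m : ℕ) :
    (∏ k ∈ Icc 1 n, h k) * (HVP g h n).coeff m ∈ R := by
  induction n using Nat.strong_induction_on generalizing m with
  | _ n ih =>
    rcases n with _ | n
    · rw [HVP_zero, coeff_one]
      split_ifs <;> simp
    rcases m with _ | j
    · simp
    have hclear : (∏ k ∈ Icc 1 (n + 1), h k) * (HVP g h (n + 1)).coeff (j + 1) =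
        ∑ k ∈ Icc 1 (n + 1), (g k * ∏ i ∈ Ioc (n + 1 - k) n, h i) *
          ((∏ i ∈ Icc 1 (n + 1 - k), h i) * (HVP g h (n + 1 - k)).coeff j) := by
      have := hh₀ (n + 1) (by omega)
      rw [coeff_HVP_succ_succ, prod_Icc_succ_top (by omega : 1 ≤ n + 1), mul_sum, mul_sum]
      refine sum_congr rfl fun k hk => ?_
      rw [← prod_Icc_one_mul_prod_Ioc _ (by grind : n + 1 - k ≤ n)]
      field_simp
    rw [hclear]
    exact R.sum_mem fun k hk =>
      R.mul_mem (R.mul_mem (hg k) (R.prod_mem fun i _ => hh i)) (ih _ (by grind) _)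

theorem prod_h_mul_A_is_posInt_general (g h : ℕ → ℤ)
    (hg : ∀ n, 1 ≤ n → 1 ≤ g n) (hh : ∀ n, 1 ≤ n → 1 ≤ h n)
    (n m : ℕ) (hm : 1 ≤ m) (hmn : m ≤ n) :
    ∃ z : ℤ, 0 < z ∧
      (∏ k ∈ Finset.Icc 1 n, (h k : ℚ)) *
          (HVP (fun k => (g k : ℚ)) (fun k => (h k : ℚ)) n).coeff m = (z : ℚ) := by
  have hg_pos : ∀ k, 1 ≤ k → (0 : ℚ) < g k := fun k hk => by exact_mod_cast hg k hk
  have hh_pos : ∀ k, 1 ≤ k → (0 : ℚ) < h k := fun k hk => by exact_mod_cast hh k hk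
  obtain ⟨z, hz⟩ := Subring.mem_bot.1 <| prod_mul_coeff_HVP_mem ⊥
    (fun k => Subring.mem_bot.2 ⟨g k, rfl⟩) (fun k => Subring.mem_bot.2 ⟨h k, rfl⟩)
    (fun k hk => (hh_pos k hk).ne') n m
  refine ⟨z, ?_, hz.symm⟩
  have : (0 : ℚ) < z := hz ▸ mul_pos (prod_pos fun k hk => hh_pos k (mem_Icc.1 hk).1)
    (coeff_HVP_pos hg_pos hh_pos hm hmn)
  exact_mod_cast this

/-- If `g, h` take positive integer values (with `g(1) = h(1) = 1`), then
`(∏_{k=1}^n h(k)) · A_{n,m}^{g,h}` is a positive integer for all `1 ≤ m ≤ n`. -/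
theorem prod_h_mul_A_is_posInt (g h : ℕ → ℤ) (hg1 : g 1 = 1) (hh1 : h 1 = 1)
    (hg : ∀ n, 1 ≤ n → 1 ≤ g n) (hh : ∀ n, 1 ≤ n → 1 ≤ h n)
    (n m : ℕ) (hm : 1 ≤ m) (hmn : m ≤ n) :
    ∃ z : ℤ, 0 < z ∧
      (∏ k ∈ Finset.Icc 1 n, (h k : ℚ)) *
          (HVP (fun k => (g k : ℚ)) (fun k => (h k : ℚ)) n).coeff m = (z : ℚ) :=
  prod_h_mul_A_is_posInt_general g h hg hh n m hm hmn
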